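/- For every X ∈ (0,∞)², the matrix S_n(X) = D²Φ_n(X)·M(X) is symmetric and positive definite, where M(X) has rows (a·X₁, b·X₁) and (c·X₂, d·X₂). In particular, for every X ∈ [0,∞)², S_n(X) is positive semidefinite. -/

import Mathlib

/-
Write `Φ = ∑ αⱼ xʲ yⁿ⁻ʲ` with `αⱼ = C(n,j) Pⱼ`, `Pⱼ = ∏_{k<j} ρₖ` and
`ρₖ = (ak + c(n-k-1)) / (bk + d(n-k-1))`. The recursion
`(j+1)(bj + d(n-j-1)) αⱼ₊₁ = (n-j)(aj + c(n-j-1)) αⱼ` says exactly that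
`(b x ∂ₓ + d y ∂ᵧ) ∂ₓΦ = (a x ∂ₓ + c y ∂ᵧ) ∂ᵧΦ`, which is the symmetry of `S = D²Φ · M`.
Then `det S = det D²Φ · (ad - bc) x y`, so everything hinges on `det D²Φ > 0`.
Expanding, `2 x²y² det D²Φ = (n-1) ∑ᵢⱼ κ(i,j) αᵢ αⱼ x^{i+j} y^{2n-i-j}` with
`κ(i,j) = n(i+j)(i+j-1) - (4n-2)ij`. On each antidiagonal `i + j = k`, both `κ` and `Pᵢ Pⱼ`
decrease as `(i,j)` moves towards the middle (for `Pᵢ Pⱼ` because `ad > bc` makes `ρ` increasing,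
so `P` is log-convex), while `∑ κ C(n,i) C(n,j) = 0` (Vandermonde). Chebyshev's sum inequality
therefore makes every antidiagonal sum nonnegative, and the one for `k = 2` equals
`2n²(n-1) ρ₀ (ρ₁ - ρ₀) > 0`.
-/

/-- The coefficient `a_{j,n}` of the polynomial `Φ_n`. -/
noncomputable def ajn (a b c d : ℝ) (n j : ℕ) : ℝ :=
  (n.choose j : ℝ) * ∏ k ∈ Finset.range j,
    (a * k + c * ((n : ℝ) - k - 1)) / (b * k + d * ((n : ℝ) - k - 1))

/-- The polynomial `Φ_n`. -/
noncomputable def Phi (a b c d : ℝ) (n : ℕ) (x y : ℝ) : ℝ :=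
  ∑ j ∈ Finset.range (n + 1), ajn a b c d n j * x ^ j * y ^ (n - j)

/-- Partial derivative with respect to the first variable. -/
noncomputable def pd1 (f : ℝ → ℝ → ℝ) (x y : ℝ) : ℝ := deriv (fun t => f t y) x

/-- Partial derivative with respect to the second variable. -/
noncomputable def pd2 (f : ℝ → ℝ → ℝ) (x y : ℝ) : ℝ := deriv (fun t => f x t) y

/-- The Hessian matrix of a function of two real variables. -/
noncomputable def Hess (f : ℝ → ℝ → ℝ) (x y : ℝ) : Matrix (Fin 2) (Fin 2) ℝ :=
  !![pd1 (pd1 f) x y, pd1 (pd2 f) x y; pd2 (pd1 f) x y, pd2 (pd2 f) x y]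

/-- The mobility matrix `M(X)`. -/
noncomputable def Mmat (a b c d x y : ℝ) : Matrix (Fin 2) (Fin 2) ℝ :=
  !![a * x, b * x; c * y, d * y]

open Finset

theorem prod_range_add_mul_prod_range_le {f : ℕ → ℝ} {N k l t : ℕ}
    (hf : ∀ m < N, 0 ≤ f m) (hmono : MonotoneOn f (Set.Iio N)) (hkl : k ≤ l) (hN : l + t ≤ N) :
    (∏ m ∈ range (k + t), f m) * ∏ m ∈ range l, f m
      ≤ (∏ m ∈ range k, f m) * ∏ m ∈ range (l + t), f m := by
  have hshift : ∏ m ∈ range t, f (k + m) ≤ ∏ m ∈ range t, f (l + m) := by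
    refine prod_le_prod (fun m hm => hf _ ?_) fun m hm => hmono ?_ ?_ (by omega) <;>
      simp only [mem_range, Set.mem_Iio] at hm ⊢ <;> omega
  have hk : 0 ≤ ∏ m ∈ range k, f m := prod_nonneg fun m hm => hf m (by simp at hm; omega)
  have hl : 0 ≤ ∏ m ∈ range l, f m := prod_nonneg fun m hm => hf m (by simp at hm; omega)
  rw [prod_range_add, prod_range_add]
  calc (∏ m ∈ range k, f m) * (∏ m ∈ range t, f (k + m)) * ∏ m ∈ range l, f m
      = ((∏ m ∈ range k, f m) * ∏ m ∈ range l, f m) * ∏ m ∈ range t, f (k + m) := by ring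
    _ ≤ ((∏ m ∈ range k, f m) * ∏ m ∈ range l, f m) * ∏ m ∈ range t, f (l + m) := by gcongr
    _ = _ := by ring

theorem sum_sum_mul_sub_mul_sub_eq {ι : Type*} (s : Finset ι) (w f g : ι → ℝ) :
    ∑ i ∈ s, ∑ j ∈ s, w i * w j * ((f i - f j) * (g i - g j))
      = 2 * ((∑ i ∈ s, w i) * ∑ i ∈ s, w i * f i * g i
        - (∑ i ∈ s, w i * f i) * ∑ i ∈ s, w i * g i) := by
  calc _ = ∑ i ∈ s, ∑ j ∈ s, (w i * f i * g i * w j + w i * (w j * f j * g j)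
        - w i * f i * (w j * g j) - w i * g i * (w j * f j)) :=
        sum_congr rfl fun i _ => sum_congr rfl fun j _ => by ring
    _ = _ := by
      simp only [sum_add_distrib, sum_sub_distrib, ← sum_mul_sum]
      ring

theorem sum_mul_sum_le_sum_mul_sum_mul {ι : Type*} {s : Finset ι} {w f g : ι → ℝ}
    (hw : ∀ i ∈ s, 0 ≤ w i) (hfg : ∀ i ∈ s, ∀ j ∈ s, 0 ≤ (f i - f j) * (g i - g j)) :
    (∑ i ∈ s, w i * f i) * ∑ i ∈ s, w i * g i ≤ (∑ i ∈ s, w i) * ∑ i ∈ s, w i * f i * g i := by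
  have := sum_sum_mul_sub_mul_sub_eq s w f g
  have : 0 ≤ ∑ i ∈ s, ∑ j ∈ s, w i * w j * ((f i - f j) * (g i - g j)) :=
    sum_nonneg fun i hi => sum_nonneg fun j hj =>
      mul_nonneg (mul_nonneg (hw i hi) (hw j hj)) (hfg i hi j hj)
  linarith

theorem sum_mul_mul_nonneg_of_sum_mul_eq_zero {ι : Type*} {s : Finset ι} {w f g : ι → ℝ}
    (hw : ∀ i ∈ s, 0 ≤ w i) (hfg : ∀ i ∈ s, ∀ j ∈ s, 0 ≤ (f i - f j) * (g i - g j))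
    (hf : ∑ i ∈ s, w i * f i = 0) : 0 ≤ ∑ i ∈ s, w i * f i * g i := by
  have h := sum_mul_sum_le_sum_mul_sum_mul hw hfg
  rw [hf, zero_mul] at h
  rcases (sum_nonneg hw).eq_or_lt with hw₀ | hw₀
  · rw [sum_eq_zero fun i hi => by rw [(sum_eq_zero_iff_of_nonneg hw).1 hw₀.symm i hi]; ring]
  · exact nonneg_of_mul_nonneg_right h hw₀

theorem Matrix.posDef_of_fin_two {A : Matrix (Fin 2) (Fin 2) ℝ} (hA : A.IsSymm)
    (h₀₀ : 0 < A 0 0) (hdet : 0 < A.det) : A.PosDef := by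
  refine Matrix.posDef_iff_dotProduct_mulVec.2 ⟨hA, fun z hz => ?_⟩
  have h10 : A 1 0 = A 0 1 := by simpa using congrFun (congrFun hA 0) 1
  rw [Matrix.det_fin_two, h10] at hdet
  simp only [dotProduct, Matrix.mulVec, Fin.sum_univ_two, star_trivial, h10]
  refine pos_of_mul_pos_right (a := A 0 0) ?_ h₀₀.le
  have key : A 0 0 * (z 0 * (A 0 0 * z 0 + A 0 1 * z 1) + z 1 * (A 0 1 * z 0 + A 1 1 * z 1))
      = (A 0 0 * z 0 + A 0 1 * z 1) ^ 2 + (A 0 0 * A 1 1 - A 0 1 * A 0 1) * z 1 ^ 2 := by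
    ring
  rw [key]
  by_cases hz1 : z 1 = 0
  · have hz0 : z 0 ≠ 0 := fun hz0 => hz (funext fun i => by fin_cases i <;> simp [hz0, hz1])
    simp only [hz1, mul_zero, add_zero, zero_pow two_ne_zero]
    positivity
  · positivity

theorem Matrix.posSemidef_of_fin_two {A : Matrix (Fin 2) (Fin 2) ℝ} (hA : A.IsSymm)
    (h₀₀ : 0 ≤ A 0 0) (h₁₁ : 0 ≤ A 1 1) (hdet : 0 ≤ A.det) : A.PosSemidef := by
  refine Matrix.posSemidef_iff_dotProduct_mulVec.2 ⟨hA, fun z => ?_⟩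
  have h10 : A 1 0 = A 0 1 := by simpa using congrFun (congrFun hA 0) 1
  rw [Matrix.det_fin_two, h10] at hdet
  simp only [dotProduct, Matrix.mulVec, Fin.sum_univ_two, star_trivial, h10]
  rcases h₀₀.eq_or_lt with h | h
  · have h01 : A 0 1 = 0 := by nlinarith
    rw [← h, h01]
    nlinarith [mul_nonneg h₁₁ (sq_nonneg (z 1))]
  · refine nonneg_of_mul_nonneg_right (a := A 0 0) ?_ h
    nlinarith [sq_nonneg (A 0 0 * z 0 + A 0 1 * z 1), mul_nonneg hdet (sq_nonneg (z 1))]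

theorem sum_antidiagonal_mul_mul_choose_mul_choose (m t : ℕ) :
    ∑ p ∈ antidiagonal (t + 2), p.1 * p.2 * ((m + 1).choose p.1 * (m + 1).choose p.2)
      = (m + 1) ^ 2 * (2 * m).choose t := by
  rw [Finset.Nat.sum_antidiagonal_succ, Finset.Nat.sum_antidiagonal_succ']
  simp only [zero_mul, zero_add, mul_zero]
  rw [two_mul, Nat.add_choose_eq, mul_sum]
  refine sum_congr rfl fun p _ => ?_
  have h₁ := Nat.add_one_mul_choose_eq m p.1
  have h₂ := Nat.add_one_mul_choose_eq m p.2
  calc (p.1 + 1) * (p.2 + 1) * ((m + 1).choose (p.1 + 1) * (m + 1).choose (p.2 + 1))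
      = ((m + 1).choose (p.1 + 1) * (p.1 + 1)) * ((m + 1).choose (p.2 + 1) * (p.2 + 1)) := by
        ring
    _ = _ := by rw [← h₁, ← h₂]; ring

theorem add_two_mul_add_one_mul_choose_add_two (N t : ℕ) :
    (t + 2) * (t + 1) * (N + 2).choose (t + 2) = (N + 2) * (N + 1) * N.choose t := by
  have h₁ := Nat.add_one_mul_choose_eq (N + 1) (t + 1)
  have h₂ := Nat.add_one_mul_choose_eq N t
  calc (t + 2) * (t + 1) * (N + 2).choose (t + 2)
      = (N + 1 + 1).choose (t + 1 + 1) * (t + 1 + 1) * (t + 1) := by ring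
    _ = (N + 2) * ((N + 1).choose (t + 1) * (t + 1)) := by rw [← h₁]; ring
    _ = _ := by rw [← h₂]; ring

def hessKernel (n : ℕ) (p : ℕ × ℕ) : ℝ :=
  n * (p.1 + p.2) * (p.1 + p.2 - 1) - (4 * n - 2) * p.1 * p.2

-- The coefficientwise form of `det D²((x + y)ⁿ) = 0`.
theorem sum_antidiagonal_hessKernel_mul_choose_mul_choose (n k : ℕ) :
    ∑ p ∈ antidiagonal k, hessKernel n p * (n.choose p.1 * n.choose p.2 : ℕ) = 0 := by
  rcases Nat.lt_or_ge k 2 with h | h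
  · interval_cases k <;> simp [hessKernel, Nat.sum_antidiagonal_succ]
  obtain ⟨t, rfl⟩ := Nat.exists_eq_add_of_le' h
  obtain _ | m := n
  · simp [hessKernel, Nat.sum_antidiagonal_succ]
  have hk : ∀ p ∈ antidiagonal (t + 2),
      hessKernel (m + 1) p * ((m + 1).choose p.1 * (m + 1).choose p.2 : ℕ)
      = ((m + 1) * (t + 2) * (t + 1) : ℝ) * ((m + 1).choose p.1 * (m + 1).choose p.2 : ℕ)
        - (4 * m + 2) * ((p.1 * p.2 * ((m + 1).choose p.1 * (m + 1).choose p.2) : ℕ) : ℝ) := by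
    intro p hp
    rw [HasAntidiagonal.mem_antidiagonal] at hp
    simp only [hessKernel, ← Nat.cast_add, hp]
    push_cast
    ring
  rw [sum_congr rfl hk, sum_sub_distrib, ← mul_sum, ← mul_sum, ← Nat.cast_sum, ← Nat.cast_sum,
    sum_antidiagonal_mul_mul_choose_mul_choose, ← Nat.add_choose_eq, ← two_mul]
  have := congrArg (Nat.cast (R := ℝ)) (add_two_mul_add_one_mul_choose_add_two (2 * m) t)
  push_cast at this ⊢
  linear_combination (m + 1 : ℝ) * this

theorem pd1_sum_mul_pow_mul_pow (s : Finset ℕ) (c : ℕ → ℝ) (e f : ℕ → ℕ) :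
    pd1 (fun x y => ∑ j ∈ s, c j * x ^ e j * y ^ f j)
      = fun x y => ∑ j ∈ s, c j * e j * x ^ (e j - 1) * y ^ f j := by
  funext x y
  rw [pd1, deriv_fun_sum fun j _ => by fun_prop]
  refine sum_congr rfl fun j _ => ?_
  rw [deriv_mul_const_field, deriv_const_mul_field, deriv_pow_field]
  ring

theorem pd2_sum_mul_pow_mul_pow (s : Finset ℕ) (c : ℕ → ℝ) (e f : ℕ → ℕ) :
    pd2 (fun x y => ∑ j ∈ s, c j * x ^ e j * y ^ f j)
      = fun x y => ∑ j ∈ s, c j * f j * x ^ e j * y ^ (f j - 1) := by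
  funext x y
  rw [pd2, deriv_fun_sum fun j _ => by fun_prop]
  refine sum_congr rfl fun j _ => ?_
  rw [deriv_const_mul_field, deriv_pow_field]
  ring

theorem mul_natCast_mul_pow_sub_one (k : ℕ) (x : ℝ) : x * (k * x ^ (k - 1)) = k * x ^ k := by
  rcases k with _ | k
  · simp
  · rw [Nat.add_sub_cancel, pow_succ]; ring

theorem sq_mul_natCast_mul_natCast_mul_pow_sub_two (k : ℕ) (x : ℝ) :
    x ^ 2 * (k * (k - 1 : ℕ) * x ^ (k - 1 - 1)) = k * (k - 1) * x ^ k := by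
  rcases k with _ | _ | k
  · simp
  · simp
  · simp only [Nat.add_sub_cancel, Nat.cast_add, Nat.cast_one]; ring

noncomputable def binaryForm (n : ℕ) (α : ℕ → ℝ) (x y : ℝ) : ℝ :=
  ∑ j ∈ range (n + 1), α j * x ^ j * y ^ (n - j)

theorem Hess_binaryForm (n : ℕ) (α : ℕ → ℝ) (x y : ℝ) :
    Hess (binaryForm n α) x y =
      !![∑ j ∈ range (n + 1), α j * j * (j - 1 : ℕ) * x ^ (j - 1 - 1) * y ^ (n - j),
         ∑ j ∈ range (n + 1), α j * j * (n - j : ℕ) * x ^ (j - 1) * y ^ (n - j - 1);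
         ∑ j ∈ range (n + 1), α j * j * (n - j : ℕ) * x ^ (j - 1) * y ^ (n - j - 1),
         ∑ j ∈ range (n + 1),
           α j * (n - j : ℕ) * (n - j - 1 : ℕ) * x ^ j * y ^ (n - j - 1 - 1)] := by
  have hF : binaryForm n α = fun x y => ∑ j ∈ range (n + 1), α j * x ^ j * y ^ (n - j) := rfl
  rw [Hess, hF, pd1_sum_mul_pow_mul_pow, pd2_sum_mul_pow_mul_pow]
  rw [pd1_sum_mul_pow_mul_pow (e := fun j => j - 1), pd2_sum_mul_pow_mul_pow (e := fun j => j - 1),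
    pd1_sum_mul_pow_mul_pow (f := fun j => n - j - 1),
    pd2_sum_mul_pow_mul_pow (f := fun j => n - j - 1)]
  simp only [mul_right_comm _ ((n - _ : ℕ) : ℝ) (_ : ℝ)]

section

variable {n : ℕ} {α : ℕ → ℝ}

theorem sq_mul_Hess_binaryForm_zero_zero (x y : ℝ) :
    x ^ 2 * Hess (binaryForm n α) x y 0 0 = binaryForm n (fun j => j * (j - 1) * α j) x y := by
  simp only [Hess_binaryForm, Matrix.of_apply, Matrix.cons_val', Matrix.cons_val_zero,
    Matrix.empty_val', Matrix.cons_val_fin_one, mul_sum, binaryForm]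
  refine sum_congr rfl fun j _ => ?_
  linear_combination (α j * y ^ (n - j)) * sq_mul_natCast_mul_natCast_mul_pow_sub_two j x

theorem mul_mul_Hess_binaryForm_zero_one (x y : ℝ) :
    x * y * Hess (binaryForm n α) x y 0 1 = binaryForm n (fun j => j * (n - j) * α j) x y := by
  simp only [Hess_binaryForm, Matrix.of_apply, Matrix.cons_val', Matrix.cons_val_zero,
    Matrix.cons_val_one, Matrix.empty_val', Matrix.cons_val_fin_one, mul_sum, binaryForm]
  refine sum_congr rfl fun j hj => ?_
  rw [← Nat.cast_sub (by simp at hj; omega)]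
  linear_combination α j * (y * ((n - j : ℕ) * y ^ (n - j - 1)) * mul_natCast_mul_pow_sub_one j x
    + j * x ^ j * mul_natCast_mul_pow_sub_one (n - j) y)

theorem sq_mul_Hess_binaryForm_one_one (x y : ℝ) :
    y ^ 2 * Hess (binaryForm n α) x y 1 1
      = binaryForm n (fun j => (n - j) * (n - j - 1) * α j) x y := by
  simp only [Hess_binaryForm, Matrix.of_apply, Matrix.cons_val', Matrix.cons_val_one,
    Matrix.empty_val', Matrix.cons_val_fin_one, mul_sum, binaryForm]
  refine sum_congr rfl fun j hj => ?_
  rw [← Nat.cast_sub (by simp at hj; omega)]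
  linear_combination (α j * x ^ j) * sq_mul_natCast_mul_natCast_mul_pow_sub_two (n - j) y

theorem Hess_binaryForm_nonneg (hα : ∀ j ≤ n, 0 ≤ α j) {x y : ℝ} (hx : 0 ≤ x) (hy : 0 ≤ y)
    (i j : Fin 2) : 0 ≤ Hess (binaryForm n α) x y i j := by
  rw [Hess_binaryForm]
  fin_cases i <;> fin_cases j <;>
    simp only [Fin.zero_eta, Fin.mk_one, Matrix.of_apply, Matrix.cons_val', Matrix.cons_val_zero,
      Matrix.cons_val_one, Matrix.empty_val', Matrix.cons_val_fin_one] <;>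
    exact sum_nonneg fun k hk => by have := hα k (by simp at hk; omega); positivity

theorem Hess_binaryForm_zero_zero_pos (hn : 2 ≤ n) (hα : ∀ j ≤ n, 0 ≤ α j)
    (hα₂ : 0 < α 2) {x y : ℝ} (hx : 0 < x) (hy : 0 < y) : 0 < Hess (binaryForm n α) x y 0 0 := by
  have h := sq_mul_Hess_binaryForm_zero_zero (n := n) (α := α) x y
  have : 0 < binaryForm n (fun j => j * (j - 1) * α j) x y := by
    refine sum_pos' (fun j hj => ?_) ⟨2, mem_range.2 (by omega), by norm_num; positivity⟩
    have := hα j (by simp at hj; omega)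
    have : (0 : ℝ) ≤ j * (j - 1) := by
      rcases j with _ | j
      · simp
      · push_cast; nlinarith
    positivity
  rw [← h] at this
  exact pos_of_mul_pos_right this (by positivity)

theorem two_mul_det_Hess_binaryForm (x y : ℝ) :
    2 * (x ^ 2 * y ^ 2 * (Hess (binaryForm n α) x y).det)
      = (n - 1) * ∑ i ∈ range (n + 1), ∑ j ∈ range (n + 1),
          hessKernel n (i, j) * (α i * α j) * (x ^ i * y ^ (n - i) * (x ^ j * y ^ (n - j))) := by
  set H := Hess (binaryForm n α) x y
  have h₁₀ : H 1 0 = H 0 1 := by simp [H, Hess_binaryForm]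
  rw [Matrix.det_fin_two, h₁₀]
  calc _ = (x ^ 2 * H 0 0) * (y ^ 2 * H 1 1) + (y ^ 2 * H 1 1) * (x ^ 2 * H 0 0)
        - 2 * ((x * y * H 0 1) * (x * y * H 0 1)) := by
        ring
    _ = _ := by
      rw [sq_mul_Hess_binaryForm_zero_zero, sq_mul_Hess_binaryForm_one_one,
        mul_mul_Hess_binaryForm_zero_one]
      simp only [binaryForm]
      rw [sum_mul_sum, sum_mul_sum, sum_mul_sum]
      simp only [mul_sum, ← sum_add_distrib, ← sum_sub_distrib]
      refine sum_congr rfl fun i _ => sum_congr rfl fun j _ => ?_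
      simp only [hessKernel]
      ring

theorem Hess_binaryForm_zero_zero_mul_add_zero_one_mul (b d x y : ℝ) :
    Hess (binaryForm n α) x y 0 0 * (b * x) + Hess (binaryForm n α) x y 0 1 * (d * y)
      = ∑ j ∈ range n,
        (j + 1) * (b * j + d * ((n : ℝ) - j - 1)) * α (j + 1) * x ^ j * y ^ (n - j - 1) := by
  simp only [Hess_binaryForm, Matrix.of_apply, Matrix.cons_val', Matrix.cons_val_zero,
    Matrix.cons_val_one, Matrix.empty_val', Matrix.cons_val_fin_one, sum_mul, ← sum_add_distrib]
  rw [sum_range_succ']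
  simp only [CharP.cast_eq_zero, mul_zero, zero_mul, add_zero, Nat.add_sub_cancel, Nat.sub_add_eq]
  refine sum_congr rfl fun j hj => ?_
  rw [mem_range] at hj
  have hx := mul_natCast_mul_pow_sub_one j x
  have hy := mul_natCast_mul_pow_sub_one (n - j - 1) y
  have e : ((n - j - 1 : ℕ) : ℝ) = n - j - 1 := by
    rw [Nat.cast_sub (by omega), Nat.cast_sub hj.le, Nat.cast_one]
  simp only [e, Nat.cast_succ] at hy ⊢
  linear_combination (α (j + 1) * (j + 1)) * (b * y ^ (n - j - 1) * hx + d * x ^ j * hy)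

theorem Hess_binaryForm_one_zero_mul_add_one_one_mul (a c x y : ℝ) :
    Hess (binaryForm n α) x y 1 0 * (a * x) + Hess (binaryForm n α) x y 1 1 * (c * y)
      = ∑ j ∈ range n,
        (n - j) * (a * j + c * ((n : ℝ) - j - 1)) * α j * x ^ j * y ^ (n - j - 1) := by
  simp only [Hess_binaryForm, Matrix.of_apply, Matrix.cons_val', Matrix.cons_val_zero,
    Matrix.cons_val_one, Matrix.empty_val', Matrix.cons_val_fin_one, sum_mul, ← sum_add_distrib]
  rw [sum_range_succ]
  simp only [Nat.sub_self, CharP.cast_eq_zero, mul_zero, zero_mul, add_zero]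
  refine sum_congr rfl fun j hj => ?_
  rw [mem_range] at hj
  have hx := mul_natCast_mul_pow_sub_one j x
  have hy := mul_natCast_mul_pow_sub_one (n - j - 1) y
  have e₁ : ((n - j : ℕ) : ℝ) = n - j := Nat.cast_sub hj.le
  have e₂ : ((n - j - 1 : ℕ) : ℝ) = n - j - 1 := by rw [Nat.cast_sub (by omega), e₁, Nat.cast_one]
  simp only [e₁, e₂] at hy ⊢
  linear_combination (α j * (n - j)) * (a * y ^ (n - j - 1) * hx + c * x ^ j * hy)

theorem Hess_binaryForm_mul_Mmat_isSymm {a b c d : ℝ}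
    (hrec : ∀ j < n, (j + 1) * (b * j + d * ((n : ℝ) - j - 1)) * α (j + 1)
      = (n - j) * (a * j + c * ((n : ℝ) - j - 1)) * α j) (x y : ℝ) :
    (Hess (binaryForm n α) x y * Mmat a b c d x y).IsSymm := by
  have hrow₀ := Hess_binaryForm_zero_zero_mul_add_zero_one_mul (n := n) (α := α) b d x y
  have hrow₁ := Hess_binaryForm_one_zero_mul_add_one_one_mul (n := n) (α := α) a c x y
  refine Matrix.IsSymm.ext fun i j => ?_
  fin_cases i <;> fin_cases j <;>
    simp only [Matrix.mul_apply, Fin.sum_univ_two, Mmat, Matrix.of_apply, Matrix.cons_val',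
      Matrix.cons_val_zero, Matrix.cons_val_one, Matrix.empty_val', Matrix.cons_val_fin_one,
      Fin.zero_eta, Fin.mk_one]
  all_goals
    rw [hrow₀, hrow₁]
    exact sum_congr rfl fun j hj => by rw [hrec j (mem_range.1 hj)]

end

def boxAntidiagonal (n k : ℕ) : Finset (ℕ × ℕ) :=
  {p ∈ range (n + 1) ×ˢ range (n + 1) | p.1 + p.2 = k}

theorem mem_boxAntidiagonal {n k : ℕ} {p : ℕ × ℕ} :
    p ∈ boxAntidiagonal n k ↔ p.1 ≤ n ∧ p.2 ≤ n ∧ p.1 + p.2 = k := by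
  simp only [boxAntidiagonal, mem_filter, mem_product, mem_range]
  omega

theorem boxAntidiagonal_two {n : ℕ} (hn : 2 ≤ n) :
    boxAntidiagonal n 2 = {(0, 2), (1, 1), (2, 0)} := by
  ext p
  simp only [mem_boxAntidiagonal, mem_insert, mem_singleton, Prod.ext_iff]
  omega

theorem sum_range_sum_range_eq_sum_boxAntidiagonal (n : ℕ) (G : ℕ × ℕ → ℝ) (x y : ℝ) :
    ∑ i ∈ range (n + 1), ∑ j ∈ range (n + 1),
        G (i, j) * (x ^ i * y ^ (n - i) * (x ^ j * y ^ (n - j)))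
      = ∑ k ∈ range (2 * n + 1), (∑ p ∈ boxAntidiagonal n k, G p) * (x ^ k * y ^ (2 * n - k)) := by
  rw [← sum_product' (f := fun i j => G (i, j) * (x ^ i * y ^ (n - i) * (x ^ j * y ^ (n - j)))),
    ← sum_fiberwise_of_maps_to (g := fun p : ℕ × ℕ => p.1 + p.2) (t := range (2 * n + 1))
      fun p hp => by simp only [mem_product, mem_range] at hp ⊢; omega]
  refine sum_congr rfl fun k _ => ?_
  rw [sum_mul]
  refine sum_congr rfl fun p hp => ?_
  obtain ⟨h₁, h₂, rfl⟩ := mem_boxAntidiagonal.1 hp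
  rw [show 2 * n - (p.1 + p.2) = (n - p.1) + (n - p.2) by omega, pow_add, pow_add]
  ring

section

variable {n : ℕ} {ρ : ℕ → ℝ}

theorem hessKernel_sub_mul_prod_sub_nonneg (hρ₀ : ∀ m < n, 0 ≤ ρ m)
    (hρ : MonotoneOn ρ (Set.Iio n)) {k : ℕ} {p q : ℕ × ℕ} (hp : p ∈ boxAntidiagonal n k)
    (hq : q ∈ boxAntidiagonal n k) :
    0 ≤ (hessKernel n p - hessKernel n q) * ((∏ m ∈ range p.1, ρ m) * ∏ m ∈ range p.2, ρ m
      - (∏ m ∈ range q.1, ρ m) * ∏ m ∈ range q.2, ρ m) := by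
  have hswap : ∀ r : ℕ × ℕ, hessKernel n r.swap = hessKernel n r := fun r => by
    simp only [hessKernel, Prod.fst_swap, Prod.snd_swap]; ring
  have hmem : ∀ r, r ∈ boxAntidiagonal n k → r.swap ∈ boxAntidiagonal n k := fun r hr => by
    rw [mem_boxAntidiagonal] at hr ⊢; simp only [Prod.fst_swap, Prod.snd_swap]; omega
  wlog hp' : p.1 ≤ p.2 generalizing p
  · simpa only [hswap, Prod.fst_swap, Prod.snd_swap, mul_comm (∏ m ∈ range p.2, ρ m)] using
      this (hmem p hp) (by simp only [Prod.fst_swap, Prod.snd_swap]; omega)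
  wlog hq' : q.1 ≤ q.2 generalizing q
  · simpa only [hswap, Prod.fst_swap, Prod.snd_swap, mul_comm (∏ m ∈ range q.2, ρ m)] using
      this (hmem q hq) (by simp only [Prod.fst_swap, Prod.snd_swap]; omega)
  wlog hpq : p.1 ≤ q.1 generalizing p q
  · convert this hq hq' hp hp' (by omega) using 1; ring
  obtain ⟨hp₁, hp₂, hpk⟩ := mem_boxAntidiagonal.1 hp
  obtain ⟨hq₁, hq₂, hqk⟩ := mem_boxAntidiagonal.1 hq
  rcases hpq.eq_or_lt with h | h
  · rw [Prod.ext h (by omega : p.2 = q.2), sub_self, zero_mul]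
  have hprod := prod_range_add_mul_prod_range_le hρ₀ hρ (k := p.1) (l := q.2) (t := q.1 - p.1)
    (by omega) (by omega)
  rw [show p.1 + (q.1 - p.1) = q.1 by omega, show q.2 + (q.1 - p.1) = p.2 by omega] at hprod
  have hkernel : hessKernel n p - hessKernel n q
      = (4 * n - 2) * ((q.1 - p.1 : ℕ) * (q.2 - p.1 : ℕ)) := by
    have hsum : (p.1 : ℝ) + p.2 = q.1 + q.2 := by exact_mod_cast hpk.trans hqk.symm
    simp only [hessKernel, Nat.cast_sub h.le, Nat.cast_sub (h.le.trans hq')]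
    rw [hsum]
    linear_combination (-(4 * n - 2) * p.1) * hsum
  have hn : (1 : ℝ) ≤ n := by exact_mod_cast (by omega : 1 ≤ n)
  rw [hkernel]
  exact mul_nonneg (mul_nonneg (by linarith) (by positivity)) (sub_nonneg.2 hprod)

theorem sum_boxAntidiagonal_hessKernel_mul_nonneg (hρ₀ : ∀ m < n, 0 ≤ ρ m)
    (hρ : MonotoneOn ρ (Set.Iio n)) (k : ℕ) :
    0 ≤ ∑ p ∈ boxAntidiagonal n k, hessKernel n p *
      ((n.choose p.1 * ∏ m ∈ range p.1, ρ m) * (n.choose p.2 * ∏ m ∈ range p.2, ρ m)) := by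
  have hbinom :
      ∑ p ∈ boxAntidiagonal n k, ((n.choose p.1 * n.choose p.2 : ℕ) : ℝ) * hessKernel n p = 0 := by
    rw [← sum_antidiagonal_hessKernel_mul_choose_mul_choose n k]
    refine sum_subset (fun p hp => ?_) (fun p hp hpf => ?_) |>.trans
      (sum_congr rfl fun p _ => mul_comm _ _)
    · exact HasAntidiagonal.mem_antidiagonal.2 (mem_boxAntidiagonal.1 hp).2.2
    · have : n < p.1 ∨ n < p.2 := by
        rw [HasAntidiagonal.mem_antidiagonal] at hp
        rw [mem_boxAntidiagonal] at hpf
        omega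
      rcases this with h | h <;> simp [Nat.choose_eq_zero_of_lt h]
  have := sum_mul_mul_nonneg_of_sum_mul_eq_zero (fun p _ => Nat.cast_nonneg _)
    (fun p hp q hq => hessKernel_sub_mul_prod_sub_nonneg hρ₀ hρ hp hq) hbinom
  convert this using 2 with p
  push_cast
  ring

end

namespace Phi

noncomputable def ratio (a b c d : ℝ) (n k : ℕ) : ℝ :=
  (a * k + c * ((n : ℝ) - k - 1)) / (b * k + d * ((n : ℝ) - k - 1))

variable {a b c d : ℝ} {n : ℕ}

theorem eq_binaryForm : Phi a b c d n = binaryForm n (ajn a b c d n) := rfl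

theorem ajn_eq_choose_mul_prod_ratio (j : ℕ) :
    ajn a b c d n j = n.choose j * ∏ k ∈ range j, ratio a b c d n k := rfl

theorem mul_add_mul_sub_pos {p q : ℝ} (hp : 0 < p) (hq : 0 < q) (hn : 2 ≤ n) {k : ℕ}
    (hk : k < n) : 0 < p * k + q * ((n : ℝ) - k - 1) := by
  have hk' : (k : ℝ) + 1 ≤ n := by exact_mod_cast hk
  rcases k.eq_zero_or_pos with rfl | hk₀
  · have hn' : (2 : ℝ) ≤ n := by exact_mod_cast hn
    simp only [Nat.cast_zero, mul_zero, zero_add, sub_zero]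
    exact mul_pos hq (by linarith)
  · have hk₀' : (0 : ℝ) < k := by exact_mod_cast hk₀
    have := mul_nonneg hq.le (by linarith : (0 : ℝ) ≤ n - k - 1)
    linarith [mul_pos hp hk₀']

theorem ratio_pos (ha : 0 < a) (hb : 0 < b) (hc : 0 < c) (hd : 0 < d) (hn : 2 ≤ n) {k : ℕ}
    (hk : k < n) : 0 < ratio a b c d n k :=
  div_pos (mul_add_mul_sub_pos ha hc hn hk) (mul_add_mul_sub_pos hb hd hn hk)

theorem ratio_strictMonoOn (hb : 0 < b) (hd : 0 < d)
    (habcd : b * c < a * d) (hn : 2 ≤ n) : StrictMonoOn (ratio a b c d n) (Set.Iio n) := by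
  intro k hk l hl hkl
  rw [ratio, ratio, div_lt_div_iff₀ (mul_add_mul_sub_pos hb hd hn hk)
    (mul_add_mul_sub_pos hb hd hn hl)]
  have hkl' : (0 : ℝ) < l - k := sub_pos.2 (by exact_mod_cast hkl)
  have hn' : (0 : ℝ) < n - 1 := by
    have : (2 : ℝ) ≤ n := by exact_mod_cast hn
    linarith
  -- the cross-multiplied difference factors as (l - k)(n - 1)(ad - bc)
  nlinarith [mul_pos (mul_pos hkl' hn') (sub_pos.2 habcd)]

theorem ajn_pos (ha : 0 < a) (hb : 0 < b) (hc : 0 < c) (hd : 0 < d) (hn : 2 ≤ n) {j : ℕ}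
    (hj : j ≤ n) : 0 < ajn a b c d n j :=
  mul_pos (by exact_mod_cast Nat.choose_pos hj)
    (prod_pos fun k hk => ratio_pos ha hb hc hd hn (by simp at hk; omega))

theorem ajn_succ {j : ℕ} (hj : j ≤ n) (hden : b * j + d * ((n : ℝ) - j - 1) ≠ 0) :
    (j + 1) * (b * j + d * ((n : ℝ) - j - 1)) * ajn a b c d n (j + 1)
      = (n - j) * (a * j + c * ((n : ℝ) - j - 1)) * ajn a b c d n j := by
  have hchoose : (n.choose (j + 1) : ℝ) * (j + 1) = n.choose j * (n - j) := by
    exact_mod_cast Nat.choose_succ_right_eq n j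
  have hratio : (b * j + d * ((n : ℝ) - j - 1)) * ratio a b c d n j
      = a * j + c * ((n : ℝ) - j - 1) := mul_div_cancel₀ _ hden
  rw [ajn_eq_choose_mul_prod_ratio, ajn_eq_choose_mul_prod_ratio, prod_range_succ]
  linear_combination (∏ k ∈ range j, ratio a b c d n k) *
    ((n.choose (j + 1) * (j + 1) : ℝ) * hratio + (a * j + c * ((n : ℝ) - j - 1)) * hchoose)

theorem sum_boxAntidiagonal_two_hessKernel_mul_ajn (hn : 2 ≤ n) :
    ∑ p ∈ boxAntidiagonal n 2, hessKernel n p * (ajn a b c d n p.1 * ajn a b c d n p.2)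
      = 2 * n ^ 2 * (n - 1) * ratio a b c d n 0 * (ratio a b c d n 1 - ratio a b c d n 0) := by
  rw [boxAntidiagonal_two hn, sum_insert (by decide), sum_insert (by decide), sum_singleton]
  simp only [ajn_eq_choose_mul_prod_ratio, hessKernel, prod_range_succ, range_zero, prod_empty,
    Nat.choose_zero_right, Nat.choose_one_right, Nat.cast_choose_two]
  push_cast
  ring

theorem det_Hess_pos (ha : 0 < a) (hb : 0 < b) (hc : 0 < c) (hd : 0 < d)
    (habcd : b * c < a * d) (hn : 2 ≤ n) {x y : ℝ} (hx : 0 < x) (hy : 0 < y) :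
    0 < (Hess (Phi a b c d n) x y).det := by
  have hexpand := two_mul_det_Hess_binaryForm (n := n) (α := ajn a b c d n) x y
  rw [sum_range_sum_range_eq_sum_boxAntidiagonal n
    (fun p => hessKernel n p * (ajn a b c d n p.1 * ajn a b c d n p.2))] at hexpand
  have hfiber : ∀ k, 0 ≤ ∑ p ∈ boxAntidiagonal n k,
      hessKernel n p * (ajn a b c d n p.1 * ajn a b c d n p.2) :=
    sum_boxAntidiagonal_hessKernel_mul_nonneg (fun m hm => (ratio_pos ha hb hc hd hn hm).le)
      (ratio_strictMonoOn hb hd habcd hn).monotoneOn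
  have hlow := single_le_sum (f := fun k => (∑ p ∈ boxAntidiagonal n k, hessKernel n p *
      (ajn a b c d n p.1 * ajn a b c d n p.2)) * (x ^ k * y ^ (2 * n - k)))
    (fun k _ => mul_nonneg (hfiber k) (by positivity)) (mem_range.2 (by omega : 2 < 2 * n + 1))
  rw [sum_boxAntidiagonal_two_hessKernel_mul_ajn hn] at hlow
  have hn' : (1 : ℝ) < n := by exact_mod_cast hn
  have hρ₀ := ratio_pos ha hb hc hd hn (by omega : 0 < n)
  have hρ₁ := ratio_strictMonoOn hb hd habcd hn (Set.mem_Iio.2 (by omega))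
    (Set.mem_Iio.2 (by omega)) zero_lt_one
  have : 0 < 2 * (x ^ 2 * y ^ 2 * (Hess (Phi a b c d n) x y).det) := by
    rw [eq_binaryForm, hexpand]
    refine mul_pos (by linarith) (lt_of_lt_of_le ?_ hlow)
    have := sub_pos.2 hρ₁
    positivity
  exact pos_of_mul_pos_right (pos_of_mul_pos_right this zero_le_two) (by positivity)

theorem Hess_nonneg (ha : 0 < a) (hb : 0 < b) (hc : 0 < c) (hd : 0 < d) (hn : 2 ≤ n)
    {x y : ℝ} (hx : 0 ≤ x) (hy : 0 ≤ y) (i j : Fin 2) : 0 ≤ Hess (Phi a b c d n) x y i j :=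
  Hess_binaryForm_nonneg (fun _ hm => (ajn_pos ha hb hc hd hn hm).le) hx hy i j

theorem Hess_mul_Mmat_isSymm (hb : 0 < b) (hd : 0 < d) (hn : 2 ≤ n) (x y : ℝ) :
    (Hess (Phi a b c d n) x y * Mmat a b c d x y).IsSymm :=
  Hess_binaryForm_mul_Mmat_isSymm
    (fun _ hj => ajn_succ hj.le (mul_add_mul_sub_pos hb hd hn hj).ne') x y

theorem Hess_mul_Mmat_nonneg (ha : 0 < a) (hb : 0 < b) (hc : 0 < c) (hd : 0 < d) (hn : 2 ≤ n)
    {x y : ℝ} (hx : 0 ≤ x) (hy : 0 ≤ y) (i j : Fin 2) :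
    0 ≤ (Hess (Phi a b c d n) x y * Mmat a b c d x y) i j := by
  rw [Matrix.mul_apply]
  refine sum_nonneg fun k _ => mul_nonneg (Hess_nonneg ha hb hc hd hn hx hy i k) ?_
  fin_cases k <;> fin_cases j <;> simp [Mmat] <;> positivity

theorem Hess_mul_Mmat_zero_zero_pos (ha : 0 < a) (hb : 0 < b) (hc : 0 < c) (hd : 0 < d)
    (hn : 2 ≤ n) {x y : ℝ} (hx : 0 < x) (hy : 0 < y) :
    0 < (Hess (Phi a b c d n) x y * Mmat a b c d x y) 0 0 := by
  have h₀₀ := Hess_binaryForm_zero_zero_pos hn (fun j hj => (ajn_pos ha hb hc hd hn hj).le)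
    (ajn_pos ha hb hc hd hn hn) hx hy
  have h₀₁ := Hess_nonneg ha hb hc hd hn hx.le hy.le 0 1
  simp only [Matrix.mul_apply, Fin.sum_univ_two, Mmat, Matrix.of_apply, Matrix.cons_val',
    Matrix.cons_val_zero, Matrix.cons_val_one, Matrix.empty_val', Matrix.cons_val_fin_one]
  rw [← eq_binaryForm] at h₀₀
  positivity

theorem det_Hess_mul_Mmat_pos (ha : 0 < a) (hb : 0 < b) (hc : 0 < c) (hd : 0 < d)
    (habcd : b * c < a * d) (hn : 2 ≤ n) {x y : ℝ} (hx : 0 < x) (hy : 0 < y) :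
    0 < (Hess (Phi a b c d n) x y * Mmat a b c d x y).det := by
  rw [Matrix.det_mul, Mmat, Matrix.det_fin_two_of,
    show a * x * (d * y) - b * x * (c * y) = (a * d - b * c) * x * y by ring]
  have := det_Hess_pos ha hb hc hd habcd hn hx hy
  have := sub_pos.2 habcd
  positivity

theorem det_Hess_mul_Mmat_nonneg (ha : 0 < a) (hb : 0 < b) (hc : 0 < c) (hd : 0 < d)
    (habcd : b * c < a * d) (hn : 2 ≤ n) {x y : ℝ} (hx : 0 ≤ x) (hy : 0 ≤ y) :
    0 ≤ (Hess (Phi a b c d n) x y * Mmat a b c d x y).det := by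
  rcases hx.eq_or_lt with rfl | hx
  · simp [Matrix.det_mul, Mmat]
  rcases hy.eq_or_lt with rfl | hy
  · simp [Matrix.det_mul, Mmat]
  exact (det_Hess_mul_Mmat_pos ha hb hc hd habcd hn hx hy).le

end Phi

/-- `S_n(X)` is symmetric positive definite on `(0,∞)²` and positive semidefinite
on `[0,∞)²`. -/
theorem Sn_posDef (a b c d : ℝ) (ha : 0 < a) (hb : 0 < b) (hc : 0 < c) (hd : 0 < d)
    (habcd : b * c < a * d) (n : ℕ) (hn : 2 ≤ n) :
    (∀ x y : ℝ, 0 < x → 0 < y →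
      (Hess (Phi a b c d n) x y * Mmat a b c d x y).IsSymm ∧
        (Hess (Phi a b c d n) x y * Mmat a b c d x y).PosDef) ∧
    ∀ x y : ℝ, 0 ≤ x → 0 ≤ y →
      (Hess (Phi a b c d n) x y * Mmat a b c d x y).PosSemidef := by
  have hsymm := Phi.Hess_mul_Mmat_isSymm (a := a) (c := c) hb hd hn
  refine ⟨fun x y hx hy => ⟨hsymm x y, ?_⟩, fun x y hx hy => ?_⟩
  · exact Matrix.posDef_of_fin_two (hsymm x y)
      (Phi.Hess_mul_Mmat_zero_zero_pos ha hb hc hd hn hx hy)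
      (Phi.det_Hess_mul_Mmat_pos ha hb hc hd habcd hn hx hy)
  · exact Matrix.posSemidef_of_fin_two (hsymm x y)
      (Phi.Hess_mul_Mmat_nonneg ha hb hc hd hn hx hy 0 0)
      (Phi.Hess_mul_Mmat_nonneg ha hb hc hd hn hx hy 1 1)
      (Phi.det_Hess_mul_Mmat_nonneg ha hb hc hd habcd hn hx hy)
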